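/- arXiv:math/0610275 — 3 statements merged into one kernel-verified Lean document; each statement's English description precedes it below -/
import Mathlib

section
/- Let r ≥ 1 be a fixed integer and p_1, ..., p_r be fixed distinct primes. Then the number N(p_1,...,p_r;x) of integers n ≤ x whose squarefree kernel is κ(n) = p_1 ⋯ p_r satisfies N(p_1,...,p_r;x) = (1/r!) (∏_{i=1}^r 1/log p_i) (log x)^r + O((log x)^{r-1}) as x → ∞. -/
/-!
Let `N_Q(x)` count the `n ≤ x` with set of prime factors `Q`. Splitting off the full power
of `q` from `n` writes every `n ≤ x` with prime factors `insert q Q` uniquely as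
`q ^ (i + 1) * m` with `m ≤ x / q ^ (i + 1)` having prime factors `Q`, so
`N_{insert q Q}(x) = ∑_{i < ⌊log x / log q⌋} N_Q(x / q ^ (i + 1))`. On the logarithmic scale
this is a Riemann sum of step `log q`, and comparing it with the integral it approximates
gives, by induction on `Q`, with `T = log x`, `S = ∑_{p ∈ Q} log p`, `P = ∏_{p ∈ Q} log p`,
`(T - S) ^ #Q / #Q! ≤ P * N_Q(x) ≤ T ^ #Q / #Q!`.
The two bounds differ by at most `#Q * S * T ^ (#Q - 1) / #Q!`.
-/

open Filter Finset Real

lemma pow_sub_pow_le_of_le {a b : ℝ} (hb : 0 ≤ b) (hab : b ≤ a) (n : ℕ) :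
    a ^ n - b ^ n ≤ n * a ^ (n - 1) * (a - b) := by
  have h := abs_pow_sub_pow_le a b n
  rw [abs_of_nonneg (sub_nonneg.2 hab), abs_of_nonneg hb, abs_of_nonneg (hb.trans hab),
    max_eq_left hab] at h
  linarith [le_abs_self (a ^ n - b ^ n)]

lemma le_pow_succ_sub_pow_succ {a b : ℝ} (hb : 0 ≤ b) (hab : b ≤ a) (k : ℕ) :
    (k + 1) * b ^ k * (a - b) ≤ a ^ (k + 1) - b ^ (k + 1) := by
  rw [← geom_sum₂_mul]
  refine mul_le_mul_of_nonneg_right ?_ (sub_nonneg.2 hab)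
  calc (k + 1 : ℝ) * b ^ k = ∑ i ∈ range (k + 1), b ^ i * b ^ (k + 1 - 1 - i) := by
        rw [sum_congr rfl fun i hi => by rw [← pow_add, add_tsub_cancel_of_le (by grind)]]
        simp
    _ ≤ ∑ i ∈ range (k + 1), a ^ i * b ^ (k + 1 - 1 - i) := by gcongr

lemma pow_sub_pow_le_mul_sum {g : ℕ → ℝ} {c : ℝ} {n : ℕ} (k : ℕ)
    (hg : ∀ i < n, 0 ≤ g (i + 1) ∧ g (i + 1) ≤ g i ∧ g i - g (i + 1) ≤ c) :
    g 0 ^ (k + 1) - g n ^ (k + 1) ≤ (k + 1) * c * ∑ i ∈ range n, g i ^ k := by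
  rw [← sum_range_sub' (fun i => g i ^ (k + 1)), mul_sum]
  refine sum_le_sum fun i hi => ?_
  obtain ⟨h0, hle, hc⟩ := hg i (mem_range.1 hi)
  have hpow : 0 ≤ g i ^ k := pow_nonneg (h0.trans hle) k
  calc g i ^ (k + 1) - g (i + 1) ^ (k + 1) ≤ (k + 1) * g i ^ k * (g i - g (i + 1)) := by
        simpa using pow_sub_pow_le_of_le h0 hle (k + 1)
    _ ≤ (k + 1) * g i ^ k * c := by gcongr
    _ = (k + 1) * c * g i ^ k := by ring

lemma mul_sum_le_pow_sub_pow {g : ℕ → ℝ} {c : ℝ} {n : ℕ} (k : ℕ) (hc : 0 ≤ c)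
    (hg : ∀ i < n, 0 ≤ g (i + 1) ∧ c ≤ g i - g (i + 1)) :
    (k + 1) * c * ∑ i ∈ range n, g (i + 1) ^ k ≤ g 0 ^ (k + 1) - g n ^ (k + 1) := by
  rw [← sum_range_sub' (fun i => g i ^ (k + 1)), mul_sum]
  refine sum_le_sum fun i hi => ?_
  obtain ⟨h0, hstep⟩ := hg i (mem_range.1 hi)
  have hpow : 0 ≤ g (i + 1) ^ k := pow_nonneg h0 k
  calc (k + 1) * c * g (i + 1) ^ k ≤ (k + 1) * g (i + 1) ^ k * (g i - g (i + 1)) := by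
        rw [mul_right_comm]; gcongr
    _ ≤ g i ^ (k + 1) - g (i + 1) ^ (k + 1) :=
        le_pow_succ_sub_pow_succ h0 (by linarith) k

lemma add_one_mul_le_of_lt_floor_div {U c : ℝ} (hc : 0 < c) {i : ℕ} (hi : i < ⌊U / c⌋₊) :
    (i + 1) * c ≤ U := by
  have : ((i + 1 : ℕ) : ℝ) ≤ U / c := (Nat.le_floor_iff' (Nat.succ_ne_zero i)).1 hi
  push_cast at this
  rwa [le_div_iff₀ hc] at this

lemma mul_sum_sub_mul_pow_le {U c : ℝ} (hc : 0 < c) (hU : 0 ≤ U) (k : ℕ) :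
    (k + 1) * c * ∑ i ∈ range ⌊U / c⌋₊, (U - (i + 1) * c) ^ k ≤ U ^ (k + 1) := by
  set A := ⌊U / c⌋₊
  have hA : A * c ≤ U := (le_div_iff₀ hc).1 (Nat.floor_le (by positivity))
  have h := mul_sum_le_pow_sub_pow (g := fun i : ℕ => U - i * c) (n := A) k hc.le fun i hi => by
    have := add_one_mul_le_of_lt_floor_div hc hi
    constructor <;> push_cast <;> linarith
  push_cast at h
  simp only [zero_mul, sub_zero] at h
  linarith [pow_nonneg (sub_nonneg.2 hA) (k + 1)]

lemma sub_pow_le_mul_sum_sub_mul_pow {U c : ℝ} (hc : 0 < c) (hcU : c ≤ U) (k : ℕ) :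
    (U - c) ^ (k + 1) ≤ (k + 1) * c * ∑ i ∈ range ⌊U / c⌋₊, (U - (i + 1) * c) ^ k := by
  set A := ⌊U / c⌋₊
  have hA : U < (A + 1) * c := (div_lt_iff₀ hc).1 (Nat.lt_floor_add_one _)
  -- clipping at `0` makes the telescoping sum end at `0`, whatever the parity of `k + 1`
  have h := pow_sub_pow_le_mul_sum (g := fun i : ℕ => max (U - (i + 1) * c) 0) (c := c) (n := A) k
    fun i hi => by
      have := add_one_mul_le_of_lt_floor_div hc hi
      refine ⟨le_max_right _ _, ?_, ?_⟩ <;> push_cast <;> grind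
  have hsum : ∑ i ∈ range A, max (U - (i + 1) * c) 0 ^ k =
      ∑ i ∈ range A, (U - (i + 1) * c) ^ k :=
    sum_congr rfl fun i hi => by
      rw [max_eq_left (by linarith [add_one_mul_le_of_lt_floor_div hc (mem_range.1 hi)])]
  simp only [Nat.cast_zero, zero_add, one_mul, max_eq_left (sub_nonneg.2 hcU), hsum] at h
  rwa [max_eq_right (by linarith), zero_pow (Nat.succ_ne_zero k), sub_zero] at h

lemma Nat.primeFactors_prime_pow_mul {q a m : ℕ} (hq : q.Prime) (ha : a ≠ 0) (hm : m ≠ 0) :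
    (q ^ a * m).primeFactors = insert q m.primeFactors := by
  rw [Nat.primeFactors_mul (pow_ne_zero _ hq.ne_zero) hm, Nat.primeFactors_prime_pow ha hq,
    insert_eq]

lemma Nat.factorization_prime_pow_mul_self {q a m : ℕ} (hq : q.Prime) (hqm : ¬q ∣ m) :
    (q ^ a * m).factorization q = a := by
  have hm : m ≠ 0 := by rintro rfl; exact hqm (dvd_zero q)
  simp [Nat.factorization_mul (pow_ne_zero _ hq.ne_zero) hm, hq.factorization_pow,
    Nat.factorization_eq_zero_of_not_dvd hqm]

lemma Nat.primeFactors_ordCompl (n q : ℕ) :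
    (ordCompl[q] n).primeFactors = n.primeFactors.erase q := by
  simp [← Nat.support_factorization, Nat.factorization_ordCompl, Finsupp.support_erase]

lemma log_div_pow {x y : ℝ} (hx : 0 < x) (hy : 0 < y) (k : ℕ) :
    log (x / y ^ k) = log x - k * log y := by
  rw [Real.log_div hx.ne' (by positivity), Real.log_pow]

section primeFactorsFiber

noncomputable def primeFactorsFiber (Q : Finset ℕ) (x : ℝ) : Finset ℕ :=
  {n ∈ Icc 1 ⌊x⌋₊ | n.primeFactors = Q}

variable {Q : Finset ℕ} {x : ℝ} {n q : ℕ}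

lemma mem_primeFactorsFiber :
    n ∈ primeFactorsFiber Q x ↔ n ≠ 0 ∧ (n : ℝ) ≤ x ∧ n.primeFactors = Q := by
  simp only [primeFactorsFiber, mem_filter, mem_Icc, Nat.one_le_iff_ne_zero]
  constructor
  · rintro ⟨⟨hn, hnx⟩, hQ⟩
    exact ⟨hn, (Nat.le_floor_iff' hn).1 hnx, hQ⟩
  · rintro ⟨hn, hnx, hQ⟩
    exact ⟨⟨hn, (Nat.le_floor_iff' hn).2 hnx⟩, hQ⟩

lemma primeFactorsFiber_empty (hx : 1 ≤ x) : primeFactorsFiber ∅ x = {1} := by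
  ext n
  simp only [mem_primeFactorsFiber, Nat.primeFactors_eq_empty, mem_singleton]
  constructor
  · rintro ⟨hn, -, rfl | rfl⟩ <;> simp_all
  · rintro rfl
    simpa using hx

lemma prime_pow_mul_mem_primeFactorsFiber_insert {a m : ℕ} (hq : q.Prime) (ha : a ≠ 0)
    (hm : m ∈ primeFactorsFiber Q (x / q ^ a)) :
    q ^ a * m ∈ primeFactorsFiber (insert q Q) x := by
  obtain ⟨hm0, hmx, rfl⟩ := mem_primeFactorsFiber.1 hm
  refine mem_primeFactorsFiber.2
    ⟨mul_ne_zero (pow_ne_zero _ hq.ne_zero) hm0, ?_, Nat.primeFactors_prime_pow_mul hq ha hm0⟩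
  rw [le_div_iff₀ (pow_pos (Nat.cast_pos.2 hq.pos) _)] at hmx
  push_cast
  linarith

lemma ordCompl_mem_primeFactorsFiber (hq : q.Prime) (hqQ : q ∉ Q)
    (hn : n ∈ primeFactorsFiber (insert q Q) x) :
    ordCompl[q] n ∈ primeFactorsFiber Q (x / q ^ n.factorization q) := by
  obtain ⟨hn0, hnx, hnQ⟩ := mem_primeFactorsFiber.1 hn
  refine mem_primeFactorsFiber.2 ⟨(Nat.ordCompl_pos q hn0).ne', ?_, ?_⟩
  · rw [le_div_iff₀ (pow_pos (Nat.cast_pos.2 hq.pos) _)]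
    calc ((ordCompl[q] n : ℕ) : ℝ) * q ^ n.factorization q = n := by
          exact_mod_cast mul_comm (ordCompl[q] n) _ ▸ Nat.ordProj_mul_ordCompl_eq_self n q
      _ ≤ x := hnx
  · rw [Nat.primeFactors_ordCompl, hnQ, erase_insert hqQ]

lemma factorization_le_floor_log_div (hq : q.Prime) (hn : n ∈ primeFactorsFiber Q x) :
    n.factorization q ≤ ⌊log x / log q⌋₊ := by
  obtain ⟨hn0, hnx, -⟩ := mem_primeFactorsFiber.1 hn
  have hqn : ((q ^ n.factorization q : ℕ) : ℝ) ≤ n := by exact_mod_cast Nat.ordProj_le q hn0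
  refine Nat.le_floor ((le_div_iff₀ (log_pos (by exact_mod_cast hq.one_lt))).2 ?_)
  rw [← Real.log_pow]
  push_cast at hqn
  exact Real.log_le_log (by have := hq.pos; positivity) (hqn.trans hnx)

lemma card_primeFactorsFiber_insert (hq : q.Prime) (hqQ : q ∉ Q) :
    #(primeFactorsFiber (insert q Q) x) =
      ∑ i ∈ range ⌊log x / log q⌋₊, #(primeFactorsFiber Q (x / q ^ (i + 1))) := by
  have hν : ∀ n ∈ primeFactorsFiber (insert q Q) x, 1 ≤ n.factorization q := fun n hn => by
    obtain ⟨hn0, -, hnQ⟩ := mem_primeFactorsFiber.1 hn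
    exact hq.factorization_pos_of_dvd hn0
      (Nat.dvd_of_mem_primeFactors (hnQ ▸ mem_insert_self q Q))
  rw [← card_sigma, eq_comm]
  refine card_bij' (fun a _ => q ^ (a.1 + 1) * a.2)
    (fun n _ => ⟨n.factorization q - 1, ordCompl[q] n⟩) ?_ ?_ ?_ ?_
  · rintro ⟨i, m⟩ h
    exact prime_pow_mul_mem_primeFactorsFiber_insert hq i.succ_ne_zero (mem_sigma.1 h).2
  · intro n hn
    have := factorization_le_floor_log_div hq hn
    refine mem_sigma.2 ⟨mem_range.2 (by grind [hν n hn]), ?_⟩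
    rw [Nat.sub_add_cancel (hν n hn)]
    exact ordCompl_mem_primeFactorsFiber hq hqQ hn
  · rintro ⟨i, m⟩ h
    obtain ⟨hm0, -, hmQ⟩ := mem_primeFactorsFiber.1 (mem_sigma.1 h).2
    have hqm : ¬q ∣ m := fun hqm => hqQ (hmQ ▸ Nat.mem_primeFactors.2 ⟨hq, hqm, hm0⟩)
    simp [Nat.factorization_prime_pow_mul_self hq hqm, Nat.mul_div_cancel_left m (pow_pos hq.pos _)]
  · intro n hn
    simp only [Nat.sub_add_cancel (hν n hn)]
    exact Nat.ordProj_mul_ordCompl_eq_self n q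

theorem prod_log_mul_card_primeFactorsFiber_le (hQ : ∀ p ∈ Q, p.Prime) (hx : 1 ≤ x) :
    (∏ p ∈ Q, log p) * #(primeFactorsFiber Q x) ≤ log x ^ #Q / (#Q).factorial := by
  induction Q using Finset.induction_on generalizing x with
  | empty => simp [primeFactorsFiber_empty hx]
  | insert q Q hqQ ih =>
    rw [forall_mem_insert] at hQ
    obtain ⟨hq, hQ⟩ := hQ
    have hx0 : 0 < x := by linarith
    have hq0 : (0 : ℝ) < q := Nat.cast_pos.2 hq.pos
    have hc : 0 < log q := log_pos (by exact_mod_cast hq.one_lt)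
    set A := ⌊log x / log q⌋₊
    have hterm : ∀ i ∈ range A,
        (∏ p ∈ Q, log p) * #(primeFactorsFiber Q (x / q ^ (i + 1))) ≤
          (log x - (i + 1) * log q) ^ #Q / (#Q).factorial := by
      intro i hi
      have := add_one_mul_le_of_lt_floor_div hc (mem_range.1 hi)
      have hlog := log_div_pow hx0 hq0 (i + 1)
      push_cast at hlog
      have h := ih (x := x / q ^ (i + 1)) hQ ((log_nonneg_iff (by positivity)).1 (by linarith))
      rwa [hlog] at h
    rw [card_primeFactorsFiber_insert hq hqQ, prod_insert hqQ, card_insert_of_notMem hqQ,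
      Nat.cast_sum, mul_assoc, mul_sum, Nat.factorial_succ, Nat.cast_mul, Nat.cast_succ]
    calc log q * ∑ i ∈ range A, (∏ p ∈ Q, log p) * #(primeFactorsFiber Q (x / q ^ (i + 1)))
        ≤ log q * ∑ i ∈ range A, (log x - (i + 1) * log q) ^ #Q / (#Q).factorial := by
          gcongr with i hi
          exact hterm i hi
      _ = ((#Q + 1) * log q * ∑ i ∈ range A, (log x - (i + 1) * log q) ^ #Q) /
            ((#Q + 1) * (#Q).factorial) := by
          rw [← sum_div]
          field_simp
      _ ≤ log x ^ (#Q + 1) / ((#Q + 1) * (#Q).factorial) := by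
          gcongr
          exact mul_sum_sub_mul_pow_le hc (log_nonneg hx) _

theorem sub_pow_le_prod_log_mul_card_primeFactorsFiber (hQ : ∀ p ∈ Q, p.Prime) (hx : 0 < x)
    (hS : ∑ p ∈ Q, log p ≤ log x) :
    (log x - ∑ p ∈ Q, log p) ^ #Q / (#Q).factorial ≤
      (∏ p ∈ Q, log p) * #(primeFactorsFiber Q x) := by
  induction Q using Finset.induction_on generalizing x with
  | empty =>
    rw [sum_empty] at hS
    simp [primeFactorsFiber_empty ((log_nonneg_iff hx).1 hS)]
  | insert q Q hqQ ih =>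
    rw [forall_mem_insert] at hQ
    obtain ⟨hq, hQ⟩ := hQ
    rw [sum_insert hqQ] at hS
    have hq0 : (0 : ℝ) < q := Nat.cast_pos.2 hq.pos
    have hc : 0 < log q := log_pos (by exact_mod_cast hq.one_lt)
    have hS0 : 0 ≤ ∑ p ∈ Q, log p := sum_nonneg fun p _ => log_natCast_nonneg p
    set U := log x - ∑ p ∈ Q, log p
    set A := ⌊U / log q⌋₊
    have hterm : ∀ i ∈ range A, (U - (i + 1) * log q) ^ #Q / (#Q).factorial ≤
        (∏ p ∈ Q, log p) * #(primeFactorsFiber Q (x / q ^ (i + 1))) := by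
      intro i hi
      have := add_one_mul_le_of_lt_floor_div hc (mem_range.1 hi)
      have hlog := log_div_pow hx hq0 (i + 1)
      push_cast at hlog
      have h := ih (x := x / q ^ (i + 1)) hQ (by positivity) (by linarith)
      rw [hlog] at h
      convert h using 3
      ring
    have hsub : range A ⊆ range ⌊log x / log q⌋₊ :=
      range_subset_range.2 (Nat.floor_mono (by gcongr; linarith))
    rw [card_primeFactorsFiber_insert hq hqQ, prod_insert hqQ, sum_insert hqQ,
      card_insert_of_notMem hqQ, Nat.cast_sum, mul_assoc, mul_sum, Nat.factorial_succ,
      Nat.cast_mul, Nat.cast_succ, sub_add_eq_sub_sub_swap]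
    calc (U - log q) ^ (#Q + 1) / ((#Q + 1) * (#Q).factorial)
        ≤ ((#Q + 1) * log q * ∑ i ∈ range A, (U - (i + 1) * log q) ^ #Q) /
            ((#Q + 1) * (#Q).factorial) := by
          gcongr
          exact sub_pow_le_mul_sum_sub_mul_pow hc (by linarith) _
      _ = log q * ∑ i ∈ range A, (U - (i + 1) * log q) ^ #Q / (#Q).factorial := by
          rw [← sum_div]
          field_simp
      _ ≤ log q * ∑ i ∈ range A,
            (∏ p ∈ Q, log p) * #(primeFactorsFiber Q (x / q ^ (i + 1))) := by
          gcongr with i hi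
          exact hterm i hi
      _ ≤ log q * ∑ i ∈ range ⌊log x / log q⌋₊,
            (∏ p ∈ Q, log p) * #(primeFactorsFiber Q (x / q ^ (i + 1))) := by
          gcongr

theorem abs_card_primeFactorsFiber_sub_le (hQ : ∀ p ∈ Q, p.Prime) (hx : 0 < x)
    (hS : ∑ p ∈ Q, log p ≤ log x) :
    |(#(primeFactorsFiber Q x) : ℝ) - log x ^ #Q / ((#Q).factorial * ∏ p ∈ Q, log p)| ≤
      #Q * (∑ p ∈ Q, log p) / ((#Q).factorial * ∏ p ∈ Q, log p) * log x ^ (#Q - 1) := by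
  set S := ∑ p ∈ Q, log p
  set P := ∏ p ∈ Q, log p
  have hP : 0 < P := prod_pos fun p hp => log_pos (by exact_mod_cast (hQ p hp).one_lt)
  have hS0 : 0 ≤ S := sum_nonneg fun p _ => log_natCast_nonneg p
  have hlo : (log x - S) ^ #Q / ((#Q).factorial * P) ≤ #(primeFactorsFiber Q x) := by
    rw [← div_div, div_le_iff₀ hP, mul_comm]
    exact sub_pow_le_prod_log_mul_card_primeFactorsFiber hQ hx hS
  have hhi : (#(primeFactorsFiber Q x) : ℝ) ≤ log x ^ #Q / ((#Q).factorial * P) := by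
    rw [← div_div, le_div_iff₀ hP, mul_comm]
    exact prod_log_mul_card_primeFactorsFiber_le hQ ((log_nonneg_iff hx).1 (hS0.trans hS))
  have hgap : log x ^ #Q - (log x - S) ^ #Q ≤ #Q * log x ^ (#Q - 1) * S := by
    simpa using pow_sub_pow_le_of_le (a := log x) (sub_nonneg.2 hS) (by linarith) #Q
  have hbound : log x ^ #Q / ((#Q).factorial * P) - (log x - S) ^ #Q / ((#Q).factorial * P) ≤
      #Q * S / ((#Q).factorial * P) * log x ^ (#Q - 1) := by
    rw [← sub_div, div_mul_eq_mul_div, mul_right_comm]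
    gcongr
  have hnonneg : 0 ≤ #Q * S / ((#Q).factorial * P) * log x ^ (#Q - 1) :=
    mul_nonneg (div_nonneg (mul_nonneg (Nat.cast_nonneg _) hS0) (by positivity))
      (pow_nonneg (hS0.trans hS) _)
  rw [abs_sub_le_iff]
  constructor <;> linarith

theorem isBigO_card_primeFactorsFiber (hQ : ∀ p ∈ Q, p.Prime) :
    (fun x : ℝ => (#(primeFactorsFiber Q x) : ℝ) -
        log x ^ #Q / ((#Q).factorial * ∏ p ∈ Q, log p))
      =O[atTop] fun x : ℝ => log x ^ (#Q - 1) := by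
  refine Asymptotics.IsBigO.of_bound
    (#Q * (∑ p ∈ Q, log p) / ((#Q).factorial * ∏ p ∈ Q, log p)) ?_
  filter_upwards [eventually_ge_atTop (exp (∑ p ∈ Q, log p))] with x hx
  have hx0 : 0 < x := (exp_pos _).trans_le hx
  have hS : ∑ p ∈ Q, log p ≤ log x := (le_log_iff_exp_le hx0).2 hx
  have hT : 0 ≤ log x := (sum_nonneg fun p _ => log_natCast_nonneg p).trans hS
  rw [Real.norm_eq_abs, Real.norm_eq_abs, abs_of_nonneg (pow_nonneg hT _)]
  exact abs_card_primeFactorsFiber_sub_le hQ hx0 hS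

end primeFactorsFiber

/-- **Corollary 1.** For fixed `r ≥ 1` and fixed distinct primes `p 1, ..., p r`, the
number `N(p_1,...,p_r;x)` of integers `n ≤ x` whose squarefree kernel is `p_1 ⋯ p_r`
(i.e. whose set of prime factors is exactly `{p_1, ..., p_r}`) satisfies
`N(p_1,...,p_r;x) = (1/r!) (∏ i, 1/log p_i) (log x)^r + O((log x)^{r-1})` as `x → ∞`. -/
theorem kernel_count_asymptotic
    (r : ℕ) (hr : 1 ≤ r) (p : Fin r → ℕ)
    (hp : ∀ i, (p i).Prime) (hinj : Function.Injective p) :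
    (fun x : ℝ =>
        (Set.ncard {n : ℕ | (n : ℝ) ≤ x ∧
            n.primeFactors = Finset.image p Finset.univ} : ℝ) -
          (1 / (r.factorial : ℝ)) * (∏ i, 1 / Real.log (p i)) * Real.log x ^ r)
      =O[atTop] (fun x : ℝ => Real.log x ^ (r - 1)) := by
  set Q := image p univ
  have hQ : ∀ q ∈ Q, q.Prime := by simpa [Q] using hp
  have hcard : #Q = r := by simp [Q, card_image_of_injective _ hinj]
  have hQ0 : (0 : ℕ).primeFactors ≠ Q := by
    rw [Nat.primeFactors_zero]
    exact ((univ_nonempty_iff.2 ⟨⟨0, hr⟩⟩).image p).ne_empty.symm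
  have hset (x : ℝ) :
      {n : ℕ | (n : ℝ) ≤ x ∧ n.primeFactors = Q} = primeFactorsFiber Q x := by
    ext n
    simp only [Set.mem_ofPred_eq, mem_coe, mem_primeFactorsFiber]
    exact ⟨fun ⟨hnx, hn⟩ => ⟨by rintro rfl; exact hQ0 hn, hnx, hn⟩, fun ⟨_, h⟩ => h⟩
  have hprod : ∏ i, 1 / log (p i) = (∏ q ∈ Q, log q)⁻¹ := by
    simp [Q, prod_image fun i _ j _ h => hinj h]
  have h := isBigO_card_primeFactorsFiber hQ
  rw [hcard] at h
  refine h.congr_left fun x => ?_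
  rw [hset, Set.ncard_coe_finset, hprod]
  ring
end

section
/- Let r ≥ 1 be a fixed integer and t_1, ..., t_r > 0 be fixed real numbers. Then uniformly for real z ≥ 1 and integers a_1, ..., a_r ≥ 1, the number of r-tuples (k_1, ..., k_r) of integers k_i ≥ 1 with k_1 t_1 + ⋯ + k_r t_r ≤ z and gcd(k_i, a_i) = 1 for every 1 ≤ i ≤ r equals (1/r!) (∏_{i=1}^r φ(a_i)/(a_i t_i)) z^r + O(z^{r-1} ∑_{i=1}^r θ(a_i)), where the implied constant depends only on r and t_1, ..., t_r. -/
def theta (a : ℕ) : ℕ := (a.divisors.filter Squarefree).card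

/-!
Sieve each coprimality condition with the Möbius function, one coordinate at a time. For a
single coordinate and a weight `(z - k t) ^ n`, the multiples `k = d m` of each `d ∣ a`
contribute `z ^ (n + 1) / ((n + 1) d t)` up to `O(z ^ n)`, by comparing the sum with the
telescoping primitive `(z - x t) ^ (n + 1) / ((n + 1) t)`. Summing against `μ(d)` turns the
main terms into `φ(a) / a` and the errors into `θ(a) z ^ n`. Fixing the first coordinate `c`
of an `r + 1`-tuple leaves an `r`-dimensional count at height `z - c t₀`, so induction on `r`
reduces everything to this one-dimensional estimate with `n = r`.
-/

open Finset ArithmeticFunction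
open scoped ArithmeticFunction.Moebius Nat

section PowSub

variable {R : Type*} [CommRing R] [LinearOrder R] [IsStrictOrderedRing R]

lemma pow_succ_sub_pow_succ_bounds {a b : R} (hb : 0 ≤ b) (hab : b ≤ a) (n : ℕ) :
    (n + 1) * b ^ n * (a - b) ≤ a ^ (n + 1) - b ^ (n + 1) ∧
      a ^ (n + 1) - b ^ (n + 1) ≤ (n + 1) * a ^ n * (a - b) := by
  have ha : 0 ≤ a := hb.trans hab
  have hterm : ∀ i ∈ range (n + 1),
      b ^ n ≤ a ^ i * b ^ (n - i) ∧ a ^ i * b ^ (n - i) ≤ a ^ n := by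
    intro i hi
    have hin : i + (n - i) = n := Nat.add_sub_cancel' (Nat.lt_succ_iff.1 (mem_range.1 hi))
    constructor
    · calc b ^ n = b ^ i * b ^ (n - i) := by rw [← pow_add, hin]
        _ ≤ a ^ i * b ^ (n - i) := by gcongr
    · calc a ^ i * b ^ (n - i) ≤ a ^ i * a ^ (n - i) := by gcongr
        _ = a ^ n := by rw [← pow_add, hin]
  rw [← geom_sum₂_mul, Nat.add_sub_cancel]
  constructor
  · have := card_nsmul_le_sum _ _ _ fun i hi => (hterm i hi).1
    simp only [card_range, nsmul_eq_mul, Nat.cast_add, Nat.cast_one] at this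
    gcongr
  · have := sum_le_card_nsmul _ _ _ fun i hi => (hterm i hi).2
    simp only [card_range, nsmul_eq_mul, Nat.cast_add, Nat.cast_one] at this
    gcongr

end PowSub

lemma sum_Icc_one_eq_sum_range {M : Type*} [AddCommMonoid M] (f : ℕ → M) (N : ℕ) :
    ∑ m ∈ Icc 1 N, f m = ∑ m ∈ range N, f (m + 1) := by
  rw [← Finset.Ico_add_one_right_eq_Icc, sum_Ico_eq_sum_range]
  simp [add_comm]

lemma abs_sum_Icc_sub_mul_pow_sub_le {s z : ℝ} (hs : 0 < s) (hz : 0 ≤ z) (n : ℕ) :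
    |∑ m ∈ Icc 1 ⌊z / s⌋₊, (z - m * s) ^ n - z ^ (n + 1) / ((n + 1) * s)| ≤ z ^ n := by
  set M := ⌊z / s⌋₊
  set f : ℕ → ℝ := fun m => (z - m * s) ^ n
  set F : ℕ → ℝ := fun m => (z - m * s) ^ (n + 1) / ((n + 1) * s)
  have hns : 0 < (n + 1 : ℝ) * s := by positivity
  have hMz : M * s ≤ z := (le_div_iff₀ hs).1 (Nat.floor_le (by positivity))
  have hzM : z < (M + 1) * s := (div_lt_iff₀ hs).1 (Nat.lt_floor_add_one _)
  -- `x ↦ (z - x s) ^ (n + 1) / ((n + 1) s)` is a primitive of `-f`, so its drop over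
  -- `[m, m + 1]` lies between the values of `f` at the endpoints
  have hstep : ∀ m < M, f (m + 1) ≤ F m - F (m + 1) ∧ F m - F (m + 1) ≤ f m := by
    intro m hm
    have hm' : ((m : ℝ) + 1) * s ≤ z := le_trans (by gcongr; exact_mod_cast hm) hMz
    obtain ⟨hlo, hhi⟩ := pow_succ_sub_pow_succ_bounds (n := n) (sub_nonneg.2 hm')
      (by linarith : z - (m + 1) * s ≤ z - m * s)
    simp only [f, F, Nat.cast_add, Nat.cast_one, ← sub_div, le_div_iff₀ hns, div_le_iff₀ hns]
    constructor <;> linarith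
  have hup : ∑ m ∈ range M, f (m + 1) ≤ F 0 - F M := by
    rw [← sum_range_sub' F M]
    exact sum_le_sum fun m hm => (hstep m (mem_range.1 hm)).1
  have hlow : F 0 - F M ≤ ∑ m ∈ range M, f (m + 1) + f 0 - f M := by
    rw [← sum_range_sub' F M, ← sum_range_succ' f M, sum_range_succ, add_sub_cancel_right]
    exact sum_le_sum fun m hm => (hstep m (mem_range.1 hm)).2
  have hFM : 0 ≤ F M ∧ F M ≤ f M := by
    have h0 : 0 ≤ z - M * s := by linarith
    refine ⟨by positivity, ?_⟩
    rw [div_le_iff₀ hns, pow_succ]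
    have : z - M * s ≤ (n + 1) * s := by nlinarith
    simp only [f]
    nlinarith [pow_nonneg h0 n]
  have hF0 : F 0 = z ^ (n + 1) / ((n + 1) * s) := by simp [F]
  have hf0 : f 0 = z ^ n := by simp [f]
  rw [sum_Icc_one_eq_sum_range, abs_sub_le_iff]
  constructor <;> linarith [pow_nonneg hz n]

section Moebius

variable {R : Type*} [CommRing R]

lemma sum_divisors_moebius (n : ℕ) :
    ∑ d ∈ n.divisors, (μ d : R) = if n = 1 then 1 else 0 := by
  have h := congr($(coe_moebius_mul_coe_zeta (R := R)) n)
  rwa [coe_mul_zeta_apply, one_apply] at h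

lemma sum_moebius_divisors_filter_dvd {a : ℕ} (ha : a ≠ 0) (k : ℕ) :
    ∑ d ∈ a.divisors with d ∣ k, (μ d : R) = if k.Coprime a then 1 else 0 := by
  have hgcd : {d ∈ a.divisors | d ∣ k} = (k.gcd a).divisors := by
    rw [← Nat.divisors_filter_dvd_of_dvd ha (Nat.gcd_dvd_right k a)]
    refine filter_congr fun d hd => ?_
    rw [Nat.dvd_gcd_iff, and_iff_left (Nat.dvd_of_mem_divisors hd)]
  rw [hgcd, sum_divisors_moebius]

lemma sum_filter_coprime_eq_sum_moebius {a : ℕ} (ha : a ≠ 0) (s : Finset ℕ) (f : ℕ → R) :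
    ∑ k ∈ s with k.Coprime a, f k = ∑ d ∈ a.divisors, (μ d : R) * ∑ k ∈ s with d ∣ k, f k := by
  calc ∑ k ∈ s with k.Coprime a, f k
      = ∑ k ∈ s, (∑ d ∈ a.divisors with d ∣ k, (μ d : R)) * f k := by
        simp_rw [sum_moebius_divisors_filter_dvd ha, ite_mul, one_mul, zero_mul, sum_filter]
    _ = ∑ d ∈ a.divisors, (μ d : R) * ∑ k ∈ s with d ∣ k, f k := by
        simp_rw [sum_mul, sum_filter, mul_sum, mul_ite, mul_zero]
        exact sum_comm

end Moebius

lemma sum_divisors_moebius_div_eq_totient_div {a : ℕ} (ha : a ≠ 0) :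
    ∑ d ∈ a.divisors, (μ d : ℝ) / d = (φ a : ℝ) / a := by
  have hsum := (sum_eq_iff_sum_mul_moebius_eq (f := fun n => (φ n : ℝ))
    (g := fun n => (n : ℝ))).1 (fun n _ => by exact_mod_cast Nat.sum_totient n) a
    (Nat.pos_of_ne_zero ha)
  rw [Nat.sum_divisorsAntidiagonal (fun d e => (μ d : ℝ) * e)] at hsum
  rw [eq_div_iff (by exact_mod_cast ha), ← hsum, sum_mul]
  refine sum_congr rfl fun d hd => ?_
  have hd0 : (d : ℝ) ≠ 0 := by exact_mod_cast (Nat.pos_of_mem_divisors hd).ne'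
  rw [Nat.cast_div (Nat.dvd_of_mem_divisors hd) hd0]
  field_simp

lemma sum_divisors_abs_moebius (a : ℕ) : ∑ d ∈ a.divisors, |(μ d : ℝ)| = theta a := by
  rw [theta, card_filter]
  push_cast
  simp [← Int.cast_abs, abs_moebius, apply_ite]

lemma totient_div_self_le_one (a : ℕ) : (φ a : ℝ) / a ≤ 1 :=
  div_le_one_of_le₀ (by exact_mod_cast a.totient_le) (Nat.cast_nonneg a)

lemma abs_sum_moebius_mul_sub_le {a : ℕ} (ha : a ≠ 0) {S : ℕ → ℝ} {X E : ℝ}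
    (hS : ∀ d ∈ a.divisors, |S d - X / d| ≤ E) :
    |∑ d ∈ a.divisors, (μ d : ℝ) * S d - φ a / a * X| ≤ theta a * E := by
  rw [← sum_divisors_moebius_div_eq_totient_div ha, sum_mul, ← sum_sub_distrib,
    ← sum_divisors_abs_moebius, sum_mul]
  refine (abs_sum_le_sum_abs _ _).trans (sum_le_sum fun d hd => ?_)
  rw [div_mul_eq_mul_div, mul_div_assoc, ← mul_sub, abs_mul]
  exact mul_le_mul_of_nonneg_left (hS d hd) (abs_nonneg _)

lemma sum_filter_dvd_Icc_one {M : Type*} [AddCommMonoid M] (f : ℕ → M) {d : ℕ} (hd : 0 < d)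
    (N : ℕ) : ∑ k ∈ Icc 1 N with d ∣ k, f k = ∑ m ∈ Icc 1 (N / d), f (d * m) := by
  have himage : {k ∈ Icc 1 N | d ∣ k} = (Icc 1 (N / d)).image (d * ·) := by
    ext k
    simp only [mem_filter, mem_Icc, mem_image, Nat.le_div_iff_mul_le hd]
    constructor
    · rintro ⟨⟨hk1, hkN⟩, m, rfl⟩
      exact ⟨m, ⟨Nat.pos_of_mul_pos_left hk1, by linarith⟩, rfl⟩
    · rintro ⟨m, ⟨hm1, hmN⟩, rfl⟩
      exact ⟨⟨Nat.mul_pos hd hm1, by linarith⟩, dvd_mul_right d m⟩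
  rw [himage, sum_image fun x _ y _ h => Nat.eq_of_mul_eq_mul_left hd h]

lemma abs_sum_coprime_sub_mul_pow_sub_le {t z : ℝ} (ht : 0 < t) (hz : 0 ≤ z) (n : ℕ) {a : ℕ}
    (ha : a ≠ 0) :
    |∑ k ∈ Icc 1 ⌊z / t⌋₊ with k.Coprime a, (z - k * t) ^ n -
        φ a / a * (z ^ (n + 1) / ((n + 1) * t))| ≤ theta a * z ^ n := by
  rw [sum_filter_coprime_eq_sum_moebius ha]
  refine abs_sum_moebius_mul_sub_le ha fun d hd => ?_
  have hd0 : 0 < d := Nat.pos_of_mem_divisors hd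
  rw [sum_filter_dvd_Icc_one _ hd0, ← Nat.floor_div_natCast, div_div, mul_comm t]
  convert abs_sum_Icc_sub_mul_pow_sub_le (by positivity : 0 < (d : ℝ) * t) hz n using 3
  · refine sum_congr rfl fun m _ => ?_
    push_cast
    ring
  · rw [div_div]
    ring

lemma mem_Icc_one_floor_div_iff {t z : ℝ} (ht : 0 < t) {k : ℕ} :
    k ∈ Icc 1 ⌊z / t⌋₊ ↔ 1 ≤ k ∧ k * t ≤ z := by
  rw [mem_Icc, and_congr_right_iff]
  intro hk
  rw [Nat.le_floor_iff' (by omega), le_div_iff₀ ht]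

noncomputable def coprimeLatticePoints (r : ℕ) (t : Fin r → ℝ) (z : ℝ) (a : Fin r → ℕ) :
    Finset (Fin r → ℕ) :=
  {k ∈ Fintype.piFinset fun i => Icc 1 ⌊z / t i⌋₊ |
    ∑ i, (k i : ℝ) * t i ≤ z ∧ ∀ i, (k i).Coprime (a i)}

section CoprimeLatticePoints

variable {r : ℕ}

lemma mem_coprimeLatticePoints_iff {t : Fin r → ℝ} (ht : ∀ i, 0 < t i) {z : ℝ}
    {a : Fin r → ℕ} {k : Fin r → ℕ} :
    k ∈ coprimeLatticePoints r t z a ↔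
      (∀ i, 1 ≤ k i) ∧ ∑ i, (k i : ℝ) * t i ≤ z ∧ ∀ i, (k i).Coprime (a i) := by
  simp only [coprimeLatticePoints, mem_filter, Fintype.mem_piFinset,
    mem_Icc_one_floor_div_iff (ht _)]
  constructor
  · rintro ⟨hbox, hsum, hcop⟩
    exact ⟨fun i => (hbox i).1, hsum, hcop⟩
  · rintro ⟨hk, hsum, hcop⟩
    refine ⟨fun i => ⟨hk i, le_trans ?_ hsum⟩, hsum, hcop⟩
    exact single_le_sum (fun j _ => mul_nonneg (Nat.cast_nonneg _) (ht j).le) (mem_univ i)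

lemma cons_mem_coprimeLatticePoints_iff {t : Fin (r + 1) → ℝ} (ht : ∀ i, 0 < t i) {z : ℝ}
    {a : Fin (r + 1) → ℕ} {c : ℕ} {m : Fin r → ℕ} :
    Fin.cons c m ∈ coprimeLatticePoints (r + 1) t z a ↔
      (1 ≤ c ∧ c.Coprime (a 0)) ∧
        m ∈ coprimeLatticePoints r (Fin.tail t) (z - c * t 0) (Fin.tail a) := by
  rw [mem_coprimeLatticePoints_iff ht, mem_coprimeLatticePoints_iff (t := Fin.tail t)
    fun i => ht i.succ]
  simp only [Fin.forall_fin_succ, Fin.sum_univ_succ, Fin.cons_zero, Fin.cons_succ, Fin.tail,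
    le_sub_iff_add_le']
  tauto

lemma card_coprimeLatticePoints_succ {t : Fin (r + 1) → ℝ} (ht : ∀ i, 0 < t i) (z : ℝ)
    (a : Fin (r + 1) → ℕ) :
    #(coprimeLatticePoints (r + 1) t z a) =
      ∑ c ∈ Icc 1 ⌊z / t 0⌋₊ with c.Coprime (a 0),
        #(coprimeLatticePoints r (Fin.tail t) (z - c * t 0) (Fin.tail a)) := by
  rw [card_eq_sum_card_fiberwise (f := fun k => k 0)]
  · refine sum_congr rfl fun c hc => ?_
    obtain ⟨hc1, hcop⟩ := mem_filter.1 hc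
    refine card_nbij' Fin.tail (fun m => (Fin.cons c m : Fin (r + 1) → ℕ)) ?_ ?_ ?_ ?_
    · intro k hk
      obtain ⟨hkP, rfl⟩ := mem_filter.1 hk
      rw [← Fin.cons_self_tail k, cons_mem_coprimeLatticePoints_iff ht] at hkP
      exact hkP.2
    · intro m hm
      rw [mem_coe, mem_filter, cons_mem_coprimeLatticePoints_iff ht]
      exact ⟨⟨⟨(mem_Icc.1 hc1).1, hcop⟩, hm⟩, Fin.cons_zero _ _⟩
    · intro k hk
      obtain ⟨_, rfl⟩ := mem_filter.1 hk
      exact Fin.cons_self_tail k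
    · intro m _
      exact Fin.tail_cons _ _
  · intro k hk
    obtain ⟨hbox, -, hcop⟩ := mem_filter.1 hk
    exact mem_filter.2 ⟨Fintype.mem_piFinset.1 hbox 0, hcop 0⟩

end CoprimeLatticePoints

noncomputable def coprimeLatticeCoeff {r : ℕ} (t : Fin r → ℝ) (a : Fin r → ℕ) : ℝ :=
  1 / (r ! : ℝ) * ∏ i, (φ (a i) : ℝ) / ((a i : ℝ) * t i)

section CoprimeLatticeCoeff

variable {r : ℕ}

lemma coprimeLatticeCoeff_nonneg {t : Fin r → ℝ} (ht : ∀ i, 0 ≤ t i) (a : Fin r → ℕ) :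
    0 ≤ coprimeLatticeCoeff t a :=
  mul_nonneg (by positivity) (prod_nonneg fun i _ => div_nonneg (Nat.cast_nonneg _)
    (mul_nonneg (Nat.cast_nonneg _) (ht i)))

lemma coprimeLatticeCoeff_le_coeff_one {t : Fin r → ℝ} (ht : ∀ i, 0 ≤ t i) (a : Fin r → ℕ) :
    coprimeLatticeCoeff t a ≤ coprimeLatticeCoeff t 1 := by
  refine mul_le_mul_of_nonneg_left (prod_le_prod (fun i _ => div_nonneg (Nat.cast_nonneg _)
    (mul_nonneg (Nat.cast_nonneg _) (ht i))) fun i _ => ?_) (by positivity)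
  simp only [Pi.one_apply, Nat.totient_one, Nat.cast_one, one_mul, ← div_div]
  exact div_le_div_of_nonneg_right (totient_div_self_le_one _) (ht i)

lemma coprimeLatticeCoeff_succ_mul_pow (t : Fin (r + 1) → ℝ) (a : Fin (r + 1) → ℕ) (z : ℝ) :
    coprimeLatticeCoeff t a * z ^ (r + 1) = coprimeLatticeCoeff (Fin.tail t) (Fin.tail a) *
      (φ (a 0) / a 0 * (z ^ (r + 1) / ((r + 1) * t 0))) := by
  simp only [coprimeLatticeCoeff, Fin.prod_univ_succ, Nat.factorial_succ, Nat.cast_mul,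
    Nat.cast_succ, Fin.tail]
  generalize (r : ℝ) + 1 = s
  ring

end CoprimeLatticeCoeff

-- Required for all `z ≥ 0`, not just `z ≥ 1`: the induction uses it at the heights `z - c t₀`.
def CoprimeLatticeCountBound (r : ℕ) (t : Fin r → ℝ) (C : ℝ) : Prop :=
  ∀ z, 0 ≤ z → ∀ a : Fin r → ℕ, (∀ i, 1 ≤ a i) →
    |(#(coprimeLatticePoints r t z a) : ℝ) - coprimeLatticeCoeff t a * z ^ r| ≤
      C * z ^ (r - 1) * ∑ i, (theta (a i) : ℝ)

lemma coprimeLatticeCountBound_zero (t : Fin 0 → ℝ) (C : ℝ) :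
    CoprimeLatticeCountBound 0 t C := by
  intro z hz a _
  simp [coprimeLatticePoints, coprimeLatticeCoeff, hz]

section CoprimeLatticeCountBound

variable {r : ℕ}

lemma abs_card_coprimeLatticePoints_succ_sub_le {t : Fin (r + 1) → ℝ} (ht : ∀ i, 0 < t i)
    {C : ℝ} (hC : 0 ≤ C) (h : CoprimeLatticeCountBound r (Fin.tail t) C) {z : ℝ} (hz : 0 ≤ z)
    {a : Fin (r + 1) → ℕ} (ha : ∀ i, 1 ≤ a i) :
    |(#(coprimeLatticePoints (r + 1) t z a) : ℝ) -
        coprimeLatticeCoeff (Fin.tail t) (Fin.tail a) *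
          ∑ c ∈ Icc 1 ⌊z / t 0⌋₊ with c.Coprime (a 0), (z - c * t 0) ^ r| ≤
      z / t 0 * (C * z ^ (r - 1) * ∑ i : Fin r, (theta (a i.succ) : ℝ)) := by
  set K := {c ∈ Icc 1 ⌊z / t 0⌋₊ | c.Coprime (a 0)}
  have hK : ∀ c ∈ K, 0 ≤ z - c * t 0 ∧ z - c * t 0 ≤ z := fun c hc => by
    have hct := ((mem_Icc_one_floor_div_iff (ht 0)).1 (mem_filter.1 hc).1).2
    have := mul_nonneg (Nat.cast_nonneg c) (ht 0).le
    constructor <;> linarith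
  have hcard : (#K : ℝ) ≤ z / t 0 :=
    calc (#K : ℝ) ≤ ⌊z / t 0⌋₊ := by
          exact_mod_cast (card_filter_le _ _).trans (Nat.card_Icc 1 _).le
      _ ≤ z / t 0 := Nat.floor_le (div_nonneg hz (ht 0).le)
  have hE : 0 ≤ C * z ^ (r - 1) * ∑ i : Fin r, (theta (a i.succ) : ℝ) := by
    have := pow_nonneg hz (r - 1)
    positivity
  rw [card_coprimeLatticePoints_succ ht, Nat.cast_sum, mul_sum, ← sum_sub_distrib]
  calc _ ≤ _ := abs_sum_le_sum_abs _ _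
    _ ≤ #K • (C * z ^ (r - 1) * ∑ i : Fin r, (theta (a i.succ) : ℝ)) := by
        refine sum_le_card_nsmul _ _ _ fun c hc =>
          (h _ (hK c hc).1 _ fun i => ha i.succ).trans ?_
        gcongr
        exacts [(hK c hc).1, (hK c hc).2]
    _ ≤ _ := by
        rw [nsmul_eq_mul]
        gcongr

lemma CoprimeLatticeCountBound.succ {t : Fin (r + 1) → ℝ} (ht : ∀ i, 0 < t i) {C : ℝ}
    (hC : 0 ≤ C) (h : CoprimeLatticeCountBound r (Fin.tail t) C) :
    CoprimeLatticeCountBound (r + 1) t (C / t 0 + coprimeLatticeCoeff (Fin.tail t) 1) := by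
  intro z hz a ha
  set A := coprimeLatticeCoeff (Fin.tail t) (Fin.tail a)
  set B := coprimeLatticeCoeff (Fin.tail t) 1
  set Θ := ∑ i : Fin r, (theta (a i.succ) : ℝ)
  have hA : 0 ≤ A := coprimeLatticeCoeff_nonneg (fun i => (ht _).le) _
  have hAB : A ≤ B := coprimeLatticeCoeff_le_coeff_one (fun i => (ht _).le) _
  have hcount := abs_card_coprimeLatticePoints_succ_sub_le ht hC h hz ha
  have hsieve :=
    abs_sum_coprime_sub_mul_pow_sub_le (ht 0) hz r (a := a 0) (by have := ha 0; omega)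
  have hpow : z * z ^ (r - 1) * Θ = z ^ r * Θ := by
    cases r with
    | zero => simp [Θ] -- the truncated exponent `0 - 1 = 0` is harmless: `Θ` is an empty sum
    | succ r => rw [Nat.add_sub_cancel, ← pow_succ']
  rw [coprimeLatticeCoeff_succ_mul_pow, Fin.sum_univ_succ, Nat.add_sub_cancel]
  set S := ∑ c ∈ Icc 1 ⌊z / t 0⌋₊ with c.Coprime (a 0), (z - c * t 0) ^ r
  set X := φ (a 0) / (a 0 : ℝ) * (z ^ (r + 1) / ((r + 1) * t 0))
  have htri := abs_sub_le (#(coprimeLatticePoints (r + 1) t z a) : ℝ) (A * S) (A * X)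
  rw [← mul_sub, abs_mul, abs_of_nonneg hA] at htri
  have hθ : 0 ≤ (theta (a 0) : ℝ) := Nat.cast_nonneg _
  have hΘ : 0 ≤ Θ := sum_nonneg fun i _ => Nat.cast_nonneg _
  have hzr := pow_nonneg hz r
  have ht0 := div_nonneg hC (ht 0).le
  calc _ ≤ z / t 0 * (C * z ^ (r - 1) * Θ) + B * (theta (a 0) * z ^ r) :=
        htri.trans (add_le_add hcount (mul_le_mul hAB hsieve (abs_nonneg _) (hA.trans hAB)))
    _ = C / t 0 * (z ^ r * Θ) + B * z ^ r * theta (a 0) := by rw [← hpow]; ring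
    _ ≤ (C / t 0 + B) * z ^ r * (theta (a 0) + Θ) := by
        nlinarith [mul_nonneg (mul_nonneg ht0 hzr) hθ,
          mul_nonneg (mul_nonneg (hA.trans hAB) hzr) hΘ]

end CoprimeLatticeCountBound

lemma exists_coprimeLatticeCountBound :
    ∀ (r : ℕ) (t : Fin r → ℝ), (∀ i, 0 < t i) → ∃ C > 0, CoprimeLatticeCountBound r t C
  | 0, t, _ => ⟨1, one_pos, coprimeLatticeCountBound_zero t 1⟩
  | r + 1, t, ht => by
    obtain ⟨C, hC, h⟩ := exists_coprimeLatticeCountBound r (Fin.tail t) fun i => ht i.succ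
    exact ⟨_, add_pos_of_pos_of_nonneg (div_pos hC (ht 0))
      (coprimeLatticeCoeff_nonneg (fun i => (ht _).le) _), h.succ ht hC.le⟩

theorem coprime_lattice_count_asymptotic_general
    (r : ℕ) (t : Fin r → ℝ) (ht : ∀ i, 0 < t i) :
    ∃ C > 0, ∀ z : ℝ, 1 ≤ z → ∀ a : Fin r → ℕ, (∀ i, 1 ≤ a i) →
      |(Set.ncard {k : Fin r → ℕ | (∀ i, 1 ≤ k i) ∧
            (∑ i, (k i : ℝ) * t i) ≤ z ∧
            ∀ i, Nat.Coprime (k i) (a i)} : ℝ) -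
          (1 / (r.factorial : ℝ)) *
            (∏ i, (Nat.totient (a i) : ℝ) / ((a i : ℝ) * t i)) * z ^ r| ≤
        C * z ^ (r - 1) * ∑ i, (theta (a i) : ℝ) := by
  obtain ⟨C, hC, hbound⟩ := exists_coprimeLatticeCountBound r t ht
  refine ⟨C, hC, fun z hz a ha => ?_⟩
  have hpoints : {k : Fin r → ℕ | (∀ i, 1 ≤ k i) ∧ (∑ i, (k i : ℝ) * t i) ≤ z ∧
      ∀ i, Nat.Coprime (k i) (a i)} = coprimeLatticePoints r t z a := by
    ext k
    rw [mem_coe, mem_coprimeLatticePoints_iff ht, Set.mem_ofPred_eq]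
  rw [hpoints, Set.ncard_coe_finset]
  exact hbound z (by linarith) a ha

/-- **Lemma 1.** For fixed `r ≥ 1` and fixed reals `t 1, ..., t r > 0`, uniformly for
real `z ≥ 1` and integers `a 1, ..., a r ≥ 1`, the number of `r`-tuples
`(k 1, ..., k r)` of positive integers with `k 1 * t 1 + ⋯ + k r * t r ≤ z` and
`gcd (k i) (a i) = 1` for all `i` equals
`(1/r!) (∏ i, φ(a i)/(a i * t i)) z^r + O(z^{r-1} ∑ i, θ(a i))`,
the implied constant depending only on `r` and `t`. -/
theorem coprime_lattice_count_asymptotic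
    (r : ℕ) (hr : 1 ≤ r) (t : Fin r → ℝ) (ht : ∀ i, 0 < t i) :
    ∃ C > 0, ∀ z : ℝ, 1 ≤ z → ∀ a : Fin r → ℕ, (∀ i, 1 ≤ a i) →
      |(Set.ncard {k : Fin r → ℕ | (∀ i, 1 ≤ k i) ∧
            (∑ i, (k i : ℝ) * t i) ≤ z ∧
            ∀ i, Nat.Coprime (k i) (a i)} : ℝ) -
          (1 / (r.factorial : ℝ)) *
            (∏ i, (Nat.totient (a i) : ℝ) / ((a i : ℝ) * t i)) * z ^ r| ≤
        C * z ^ (r - 1) * ∑ i, (theta (a i) : ℝ) :=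
  coprime_lattice_count_asymptotic_general r t ht
end

section
/- Let s ≥ -1 be a fixed real number. Then for real z ≥ 3, ∑_{n ≤ z} φ(n) n^s = z^{s+2}/((s+2) ζ(2)) + O(z^{s+1} log z). -/
open Finset Real ArithmeticFunction
open scoped ArithmeticFunction.Moebius

/-!
Möbius inversion gives `φ(n) n^s = ∑_{dm = n} μ(d) d^s m^(s+1)`, so the sum is
`∑_{d ≤ z} μ(d) d^s ∑_{m ≤ z/d} m^(s+1)`. Comparing each inner sum with `∫₀^(z/d) x^(s+1) dx`
costs `(z/d)^(s+1)`, and these errors, weighted by `d^s`, add up to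
`z^(s+1) ∑_{d ≤ z} 1/d ≤ z^(s+1) (1 + log z)`. The main terms add up to
`z^(s+2)/(s+2) · ∑_{d ≤ z} μ(d)/d²`, and `∑ μ(d)/d² = 1/ζ(2)` with a tail `O(1/z)`, which costs
another `O(z^(s+1))`.
-/

theorem sum_Ioc_zero_eq_sum_range {M : Type*} [AddCommMonoid M] (f : ℕ → M) (n : ℕ) :
    ∑ m ∈ Ioc 0 n, f m = ∑ i ∈ range n, f (i + 1) := by
  rw [range_eq_Ico, sum_Ico_add' f, ← Ico_add_one_add_one_eq_Ioc]

theorem MonotoneOn.integral_le_sum_Ioc {f : ℝ → ℝ} {n : ℕ} (hf : MonotoneOn f (Set.Icc 0 n)) :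
    ∫ x in (0 : ℝ)..n, f x ≤ ∑ m ∈ Ioc 0 n, f m := by
  simpa [sum_Ioc_zero_eq_sum_range] using
    MonotoneOn.integral_le_sum (x₀ := 0) (a := n) (by simpa using hf)

theorem MonotoneOn.sum_Ioc_le_integral_add {f : ℝ → ℝ} {n : ℕ} (hf : MonotoneOn f (Set.Icc 0 n)) :
    ∑ m ∈ Ioc 0 n, f m ≤ (∫ x in (0 : ℝ)..n, f x) + f n - f 0 := by
  have h := MonotoneOn.sum_le_integral (x₀ := 0) (a := n) (by simpa using hf)
  have hshift := sum_range_succ' (fun i : ℕ => f i) n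
  rw [sum_range_succ] at hshift
  simp only [zero_add] at h
  simp only [sum_Ioc_zero_eq_sum_range, Nat.cast_add, Nat.cast_one, Nat.cast_zero] at hshift ⊢
  linarith

theorem abs_sum_Ioc_rpow_sub_le {t y : ℝ} (ht : 0 ≤ t) (hy : 0 ≤ y) :
    |∑ m ∈ Ioc 0 ⌊y⌋₊, (m : ℝ) ^ t - y ^ (t + 1) / (t + 1)| ≤ y ^ t := by
  set n := ⌊y⌋₊
  have hny : (n : ℝ) ≤ y := Nat.floor_le hy
  have hyn : y - n ≤ 1 := by linarith [Nat.lt_floor_add_one y]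
  have hmono : MonotoneOn (fun x : ℝ => x ^ t) (Set.Icc 0 n) :=
    (monotoneOn_rpow_Ici_of_exponent_nonneg ht).mono Set.Icc_subset_Ici_self
  have hint : ∀ a b : ℝ, ∫ x in a..b, x ^ t = (b ^ (t + 1) - a ^ (t + 1)) / (t + 1) :=
    fun a b => integral_rpow (Or.inl (by linarith))
  have htail : ∫ x in (n : ℝ)..y, x ^ t ≤ y ^ t := by
    calc ∫ x in (n : ℝ)..y, x ^ t ≤ ∫ _ in (n : ℝ)..y, y ^ t :=
          intervalIntegral.integral_mono_on hny
            ((continuous_rpow_const ht).intervalIntegrable _ _) intervalIntegrable_const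
            fun x hx => rpow_le_rpow (n.cast_nonneg.trans hx.1) hx.2 ht
      _ = (y - n) * y ^ t := by simp
      _ ≤ y ^ t := mul_le_of_le_one_left (by positivity) hyn
  have htail_nonneg : 0 ≤ ∫ x in (n : ℝ)..y, x ^ t :=
    intervalIntegral.integral_nonneg hny fun x hx => rpow_nonneg (n.cast_nonneg.trans hx.1) t
  have hlow := hmono.integral_le_sum_Ioc
  have hupp := hmono.sum_Ioc_le_integral_add
  have hnt : (n : ℝ) ^ t ≤ y ^ t := rpow_le_rpow n.cast_nonneg hny ht
  have h0t : (0 : ℝ) ≤ 0 ^ t := rpow_nonneg le_rfl t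
  rw [hint] at hlow hupp htail htail_nonneg
  rw [zero_rpow (by linarith), sub_zero] at hlow hupp
  rw [sub_div] at htail htail_nonneg
  rw [abs_le]
  constructor <;> linarith

theorem LSeries_moebius_two : LSeries (fun n => (μ n : ℂ)) 2 = 6 / (π : ℂ) ^ 2 := by
  have h2 : (1 : ℝ) < (2 : ℂ).re := by norm_num
  have h := LSeries_zeta_mul_Lseries_moebius h2
  rw [LSeries_zeta_eq_riemannZeta h2, riemannZeta_two] at h
  have hπ : (π : ℂ) ≠ 0 := Complex.ofReal_ne_zero.mpr pi_ne_zero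
  field_simp
  linear_combination 6 * h

theorem hasSum_moebius_div_sq : HasSum (fun d : ℕ => (μ d : ℝ) / (d : ℝ) ^ 2) (6 / π ^ 2) := by
  have h := (LSeriesSummable_moebius_iff.mpr (by norm_num : (1 : ℝ) < (2 : ℂ).re)).LSeriesHasSum
  rw [LSeriesHasSum, LSeries_moebius_two] at h
  refine Complex.hasSum_ofReal.mp ?_
  push_cast
  convert h using 2 with n
  rcases eq_or_ne n 0 with rfl | hn
  · simp
  · rw [LSeries.term_of_ne_zero hn, ← Complex.cpow_natCast]
    norm_num

theorem abs_tsum_nat_add_le_of_abs_le_inv_sq {f : ℕ → ℝ} (hf : ∀ n, |f n| ≤ ((n : ℝ) ^ 2)⁻¹)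
    (N : ℕ) : |∑' i, f (i + (N + 1))| ≤ 2 / (N + 1) := by
  have hsq : Summable fun n : ℕ => ((n : ℝ) ^ 2)⁻¹ := summable_nat_pow_inv.mpr one_lt_two
  have hsum : Summable fun i => |f (i + (N + 1))| :=
    .of_nonneg_of_le (fun _ => abs_nonneg _) (fun i => hf _)
      (hsq.comp_injective (add_left_injective (N + 1)))
  calc |∑' i, f (i + (N + 1))| ≤ ∑' i, |f (i + (N + 1))| := by
        simpa only [Real.norm_eq_abs] using norm_tsum_le_tsum_norm (f := fun i => f (i + (N + 1)))
          (by simpa only [Real.norm_eq_abs] using hsum)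
    _ ≤ 2 / (N + 1) := by
      refine tsum_le_of_sum_range_le (fun _ => abs_nonneg _) fun m => ?_
      have hshift := sum_Ico_add' (fun j : ℕ => ((j : ℝ) ^ 2)⁻¹) 0 m (N + 1)
      rw [zero_add, ← range_eq_Ico, Ico_add_one_left_eq_Ioo] at hshift
      calc ∑ i ∈ range m, |f (i + (N + 1))| ≤ ∑ j ∈ Ioo N (m + (N + 1)), ((j : ℝ) ^ 2)⁻¹ :=
            hshift ▸ sum_le_sum fun i _ => hf _
        _ ≤ 2 / (N + 1) := by exact_mod_cast sum_Ioo_inv_sq_le N (m + (N + 1))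

theorem abs_moebius_div_sq_le (n : ℕ) : |(μ n : ℝ) / (n : ℝ) ^ 2| ≤ ((n : ℝ) ^ 2)⁻¹ := by
  rw [abs_div, abs_of_nonneg (sq_nonneg (n : ℝ)), div_eq_mul_inv]
  exact mul_le_of_le_one_left (by positivity) (by exact_mod_cast abs_moebius_le_one)

theorem abs_sum_Ioc_moebius_div_sq_sub_le (N : ℕ) :
    |∑ d ∈ Ioc 0 N, (μ d : ℝ) / (d : ℝ) ^ 2 - 6 / π ^ 2| ≤ 2 / ((N : ℝ) + 1) := by
  have htail := hasSum_moebius_div_sq.summable.sum_add_tsum_nat_add (N + 1)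
  rw [hasSum_moebius_div_sq.tsum_eq, sum_range_succ',
    ← sum_Ioc_zero_eq_sum_range (fun d => (μ d : ℝ) / (d : ℝ) ^ 2)] at htail
  simp only [ArithmeticFunction.map_zero, Int.cast_zero, zero_div, add_zero] at htail
  rw [← htail, sub_add_cancel_left, abs_neg]
  exact abs_tsum_nat_add_le_of_abs_le_inv_sq abs_moebius_div_sq_le N

theorem totient_eq_sum_moebius_mul {R : Type*} [Ring R] {n : ℕ} (hn : 0 < n) :
    (n.totient : R) = ∑ p ∈ n.divisorsAntidiagonal, (μ p.1 : R) * p.2 := by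
  refine ((sum_eq_iff_sum_mul_moebius_eq (f := fun m => (m.totient : R)) (g := fun m => m)).mp
    (fun m _ => ?_) n hn).symm
  rw [← Nat.cast_sum, Nat.sum_totient]

theorem sum_Ioc_totient_mul_rpow (s : ℝ) (N : ℕ) :
    ∑ n ∈ Ioc 0 N, (n.totient : ℝ) * (n : ℝ) ^ s =
      ∑ d ∈ Ioc 0 N, (μ d : ℝ) * (d : ℝ) ^ s * ∑ m ∈ Ioc 0 (N / d), (m : ℝ) ^ (s + 1) := by
  let f : ArithmeticFunction ℝ := ⟨fun d => μ d * (d : ℝ) ^ s, by simp⟩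
  let g : ArithmeticFunction ℝ := ⟨fun m => m * (m : ℝ) ^ s, by simp⟩
  have hfg : ∀ n ∈ Ioc 0 N, (n.totient : ℝ) * (n : ℝ) ^ s = (f * g) n := by
    intro n hn
    rw [totient_eq_sum_moebius_mul (mem_Ioc.mp hn).1, sum_mul, mul_apply]
    refine sum_congr rfl fun p hp => ?_
    rw [← (Nat.mem_divisorsAntidiagonal.mp hp).1, Nat.cast_mul,
      mul_rpow p.1.cast_nonneg p.2.cast_nonneg]
    calc _ = (μ p.1 * (p.1 : ℝ) ^ s) * (p.2 * (p.2 : ℝ) ^ s) := by ring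
      _ = f p.1 * g p.2 := rfl
  rw [sum_congr rfl hfg, sum_Ioc_mul_eq_sum_sum]
  refine sum_congr rfl fun d _ => congrArg _ (sum_congr rfl fun m hm => ?_)
  rw [rpow_add_one (Nat.cast_ne_zero.mpr (mem_Ioc.mp hm).1.ne'), mul_comm]
  rfl

theorem rpow_mul_div_rpow_add_natCast {d : ℝ} (hd : 0 < d) {z : ℝ} (hz : 0 ≤ z) (s : ℝ) (k : ℕ) :
    d ^ s * (z / d) ^ (s + k) = z ^ (s + k) / d ^ k := by
  rw [div_rpow hz hd.le, rpow_add_natCast hd.ne']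
  field_simp

theorem abs_rpow_mul_sum_Ioc_rpow_sub_le {s z : ℝ} (hs : -1 ≤ s) (hz : 0 ≤ z) {d : ℕ} (hd : 0 < d) :
    |(d : ℝ) ^ s * ∑ m ∈ Ioc 0 (⌊z⌋₊ / d), (m : ℝ) ^ (s + 1) - z ^ (s + 2) / (s + 2) / d ^ 2| ≤
      z ^ (s + 1) / d := by
  have hd' : (0 : ℝ) < d := Nat.cast_pos.mpr hd
  have hds : 0 < (d : ℝ) ^ s := rpow_pos_of_pos hd' s
  have h := abs_sum_Ioc_rpow_sub_le (by linarith : 0 ≤ s + 1) (div_nonneg hz hd'.le)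
  have e1 := rpow_mul_div_rpow_add_natCast hd' hz s 1
  have e2 := rpow_mul_div_rpow_add_natCast hd' hz s 2
  rw [Nat.cast_one, pow_one] at e1
  rw [show s + ((2 : ℕ) : ℝ) = s + 1 + 1 by push_cast; ring] at e2
  rw [← Nat.floor_div_natCast, show s + 2 = s + 1 + 1 by ring, ← e1, div_right_comm, ← e2,
    mul_div_assoc, ← mul_sub, abs_mul, abs_of_pos hds]
  exact mul_le_mul_of_nonneg_left h hds.le

theorem sum_Ioc_inv_le_one_add_log (N : ℕ) : ∑ d ∈ Ioc 0 N, (d : ℝ)⁻¹ ≤ 1 + Real.log N := by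
  have h := harmonic_le_one_add_log N
  rw [harmonic_eq_sum_Icc, show Icc 1 N = Ioc 0 N from Icc_add_one_left_eq_Ioc 0 N] at h
  push_cast at h
  exact h

theorem abs_sum_Ioc_totient_mul_rpow_sub_le {s z : ℝ} (hs : -1 ≤ s) (hz : 1 ≤ z) :
    |∑ n ∈ Ioc 0 ⌊z⌋₊, (n.totient : ℝ) * (n : ℝ) ^ s - z ^ (s + 2) / (s + 2) * (6 / π ^ 2)| ≤
      z ^ (s + 1) * (3 + Real.log z) := by
  have hz0 : 0 < z := by linarith
  have hA : 0 ≤ z ^ (s + 2) / (s + 2) := div_nonneg (by positivity) (by linarith)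
  set N := ⌊z⌋₊
  set A := z ^ (s + 2) / (s + 2)
  have hsplit : ∑ n ∈ Ioc 0 N, (n.totient : ℝ) * (n : ℝ) ^ s - A * (6 / π ^ 2) =
      ∑ d ∈ Ioc 0 N, (μ d : ℝ) * ((d : ℝ) ^ s * ∑ m ∈ Ioc 0 (N / d), (m : ℝ) ^ (s + 1) - A / d ^ 2)
        + A * (∑ d ∈ Ioc 0 N, (μ d : ℝ) / (d : ℝ) ^ 2 - 6 / π ^ 2) := by
    simp only [sum_Ioc_totient_mul_rpow, mul_sub, sum_sub_distrib, mul_sum, mul_assoc,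
      mul_div_left_comm _ A]
    ring
  have hdivisor : |∑ d ∈ Ioc 0 N, (μ d : ℝ) *
      ((d : ℝ) ^ s * ∑ m ∈ Ioc 0 (N / d), (m : ℝ) ^ (s + 1) - A / d ^ 2)| ≤
        z ^ (s + 1) * (1 + Real.log z) :=
    calc _ ≤ ∑ d ∈ Ioc 0 N, z ^ (s + 1) * (d : ℝ)⁻¹ := by
          refine (abs_sum_le_sum_abs _ _).trans (sum_le_sum fun d hd => ?_)
          rw [abs_mul, ← div_eq_mul_inv]
          exact (mul_le_of_le_one_left (abs_nonneg _) (by exact_mod_cast abs_moebius_le_one)).trans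
            (abs_rpow_mul_sum_Ioc_rpow_sub_le hs hz0.le (mem_Ioc.mp hd).1)
      _ ≤ z ^ (s + 1) * (1 + Real.log N) := by
          rw [← mul_sum]
          exact mul_le_mul_of_nonneg_left (sum_Ioc_inv_le_one_add_log N) (by positivity)
      _ ≤ z ^ (s + 1) * (1 + Real.log z) := by
          gcongr
          exacts [Nat.cast_pos.mpr (Nat.floor_pos.mpr hz), Nat.floor_le hz0.le]
  have hzeta : |A * (∑ d ∈ Ioc 0 N, (μ d : ℝ) / (d : ℝ) ^ 2 - 6 / π ^ 2)| ≤ 2 * z ^ (s + 1) :=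
    calc _ ≤ A * (2 / z) := by
          rw [abs_mul, abs_of_nonneg hA]
          exact mul_le_mul_of_nonneg_left ((abs_sum_Ioc_moebius_div_sq_sub_le N).trans
            (div_le_div_of_nonneg_left zero_le_two hz0 (Nat.lt_floor_add_one z).le)) hA
      _ ≤ z ^ (s + 2) * (2 / z) :=
          mul_le_mul_of_nonneg_right (div_le_self (by positivity) (by linarith)) (by positivity)
      _ = 2 * z ^ (s + 1) := by
          rw [show s + 2 = s + 1 + 1 by ring, rpow_add_one hz0.ne']
          field_simp
  rw [hsplit]
  exact (abs_add_le _ _).trans (by linarith)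

/-- For a fixed real `s ≥ -1`, for real `z ≥ 3`,
`∑_{n ≤ z} φ(n) n^s = z^{s+2}/((s+2) ζ(2)) + O(z^{s+1} log z)`, where `ζ(2) = π²/6`. -/
theorem totient_power_sum_asymptotic (s : ℝ) (hs : -1 ≤ s) :
    ∃ C > 0, ∀ z : ℝ, 3 ≤ z →
      |(∑ n ∈ Finset.Icc 1 ⌊z⌋₊, (Nat.totient n : ℝ) * (n : ℝ) ^ s) -
          z ^ (s + 2) / ((s + 2) * (Real.pi ^ 2 / 6))| ≤
        C * z ^ (s + 1) * Real.log z := by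
  refine ⟨4, by norm_num, fun z hz => ?_⟩
  have hlog : 1 ≤ Real.log z := by
    rw [le_log_iff_exp_le (by linarith)]
    exact exp_one_lt_three.le.trans hz
  have hIcc : Icc 1 ⌊z⌋₊ = Ioc 0 ⌊z⌋₊ := Icc_add_one_left_eq_Ioc 0 _
  have hmain : z ^ (s + 2) / ((s + 2) * (π ^ 2 / 6)) = z ^ (s + 2) / (s + 2) * (6 / π ^ 2) := by
    field_simp
  rw [hIcc, hmain]
  calc _ ≤ z ^ (s + 1) * (3 + Real.log z) := abs_sum_Ioc_totient_mul_rpow_sub_le hs (by linarith)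
    _ ≤ z ^ (s + 1) * (4 * Real.log z) := by gcongr; linarith
    _ = 4 * z ^ (s + 1) * Real.log z := by ring
end
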